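/- If a finite connected graph V can be partitioned into two nonempty sets V1 and V2, each inducing a connected subgraph of size at least m, then V admits a spanning tree containing an edge whose removal yields two trees each of size at least m. -/

import Mathlib

/-!
Since `G` is connected it has an edge `ab` from `V1` to `V2`. Keep in `G` only the edges inside
`V1` or inside `V2`, together with `ab`: this graph is connected, so it has a spanning tree `T`,
and `ab` is the only edge of `T` that crosses the partition. Deleting it therefore leaves no path
between the sides, while removing one edge from a connected graph leaves every vertex reachable
from one of its endpoints; so the two components are exactly `V1` and `V2`.
-/

namespace SimpleGraph

variable {V : Type*} {G T : SimpleGraph V} {S : Set V} {a b u v x y : V}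

def pruneCut (G : SimpleGraph V) (S : Set V) (a b : V) : SimpleGraph V where
  Adj x y := G.Adj x y ∧ ((x ∈ S ↔ y ∈ S) ∨ s(x, y) = s(a, b))
  symm := ⟨fun _ _ h => ⟨h.1.symm, by rw [Iff.comm, Sym2.eq_swap]; exact h.2⟩⟩
  loopless := ⟨fun x h => G.loopless.irrefl x h.1⟩

lemma pruneCut_le : G.pruneCut S a b ≤ G := fun _ _ h => h.1

lemma Reachable.of_forall_adj {p : V → Prop} (hp : ∀ ⦃x y⦄, G.Adj x y → p x → p y)
    (h : G.Reachable x y) (hx : p x) : p y := by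
  have h' := (G.reachable_iff_reflTransGen x y).mp h
  clear h
  induction h' with
  | refl => exact hx
  | tail _ hyz ih => exact hp hyz ih

lemma Reachable.mem_iff_mem (hG : ∀ ⦃x y⦄, G.Adj x y → (x ∈ S ↔ y ∈ S))
    (h : G.Reachable x y) : x ∈ S ↔ y ∈ S :=
  h.of_forall_adj (p := fun z => x ∈ S ↔ z ∈ S) (fun _ _ hyz hy => hy.trans (hG hyz)) Iff.rfl

lemma Preconnected.exists_adj_mem_notMem (hG : G.Preconnected) (hx : x ∈ S) (hy : y ∉ S) :
    ∃ a b, G.Adj a b ∧ a ∈ S ∧ b ∉ S := by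
  obtain ⟨d, -, hd⟩ := (hG x y).some.exists_boundary_dart S hx hy
  exact ⟨d.fst, d.snd, d.adj, hd⟩

lemma Preconnected.reachable_of_induce {H : SimpleGraph V} (hS : (G.induce S).Preconnected)
    (hGH : ∀ ⦃x y⦄, G.Adj x y → x ∈ S → y ∈ S → H.Adj x y) (hx : x ∈ S) (hy : y ∈ S) :
    H.Reachable x y :=
  (hS ⟨x, hx⟩ ⟨y, hy⟩).map ⟨Subtype.val, fun {p q} h => hGH h p.2 q.2⟩

lemma Preconnected.reachable_deleteEdges_or (hT : T.Preconnected) (u v x : V) :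
    (T.deleteEdges {s(u, v)}).Reachable u x ∨ (T.deleteEdges {s(u, v)}).Reachable v x := by
  refine (hT u x).of_forall_adj
    (p := fun z =>
      (T.deleteEdges {s(u, v)}).Reachable u z ∨ (T.deleteEdges {s(u, v)}).Reachable v z)
    (fun y z hyz hy => ?_) (Or.inl .rfl)
  by_cases he : s(y, z) = s(u, v)
  · have hz : z = u ∨ z = v := Sym2.mem_iff.mp (he ▸ Sym2.mem_mk_right y z)
    rcases hz with rfl | rfl
    exacts [Or.inl .rfl, Or.inr .rfl]
  · have hD : (T.deleteEdges {s(u, v)}).Adj y z := by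
      rw [deleteEdges_adj, Set.mem_singleton_iff]
      exact ⟨hyz, he⟩
    exact hy.imp (·.trans hD.reachable) (·.trans hD.reachable)

lemma Preconnected.reachable_deleteEdges_iff_mem (hT : T.Preconnected)
    (hD : ∀ ⦃x y⦄, (T.deleteEdges {s(u, v)}).Adj x y → (x ∈ S ↔ y ∈ S))
    (hu : u ∈ S) (hv : v ∉ S) (x : V) :
    (T.deleteEdges {s(u, v)}).Reachable u x ↔ x ∈ S :=
  ⟨fun h => (h.mem_iff_mem hD).mp hu, fun hx => (hT.reachable_deleteEdges_or u v x).resolve_right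
    fun h => hv ((h.mem_iff_mem hD).mpr hx)⟩

lemma Preconnected.reachable_deleteEdges_iff_notMem (hT : T.Preconnected)
    (hD : ∀ ⦃x y⦄, (T.deleteEdges {s(u, v)}).Adj x y → (x ∈ S ↔ y ∈ S))
    (hu : u ∈ S) (hv : v ∉ S) (x : V) :
    (T.deleteEdges {s(u, v)}).Reachable v x ↔ x ∉ S := by
  rw [Sym2.eq_swap] at hD ⊢
  exact hT.reachable_deleteEdges_iff_mem (S := Sᶜ) (fun _ _ h => not_congr (hD h)) hv
    (not_not.mpr hu) x

lemma connected_pruneCut (hS : (G.induce S).Connected) (hSc : (G.induce Sᶜ).Connected)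
    (hab : G.Adj a b) (ha : a ∈ S) (hb : b ∉ S) : (G.pruneCut S a b).Connected := by
  refine (connected_iff_exists_forall_reachable _).mpr ⟨a, fun x => ?_⟩
  by_cases hx : x ∈ S
  · exact hS.preconnected.reachable_of_induce
      (fun _ _ h hy hz => ⟨h, .inl (iff_of_true hy hz)⟩) ha hx
  · have hab' : (G.pruneCut S a b).Adj a b := ⟨hab, .inr rfl⟩
    exact hab'.reachable.trans <| hSc.preconnected.reachable_of_induce
      (fun _ _ h hy hz => ⟨h, .inl (iff_of_false hy hz)⟩) hb hx

lemma adj_of_le_pruneCut (hT : T ≤ G.pruneCut S a b) (hconn : T.Preconnected)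
    (ha : a ∈ S) (hb : b ∉ S) : T.Adj a b := by
  obtain ⟨x, y, hxy, hx, hy⟩ := hconn.exists_adj_mem_notMem ha hb
  have he : s(x, y) = s(a, b) := (hT hxy).2.resolve_left fun h => hy (h.mp hx)
  rw [← mem_edgeSet, ← he]
  exact hxy

lemma mem_iff_mem_of_le_pruneCut (hT : T ≤ G.pruneCut S a b)
    (h : (T.deleteEdges {s(a, b)}).Adj x y) : x ∈ S ↔ y ∈ S := by
  rw [deleteEdges_adj, Set.mem_singleton_iff] at h
  exact (hT h.1).2.resolve_right h.2

end SimpleGraph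

open SimpleGraph in
theorem stmt_0 {V : Type*} [Fintype V] [DecidableEq V] (G : SimpleGraph V) (hG : G.Connected)
    (m : ℕ) (V1 V2 : Finset V)
    (h1 : V1.Nonempty) (h2 : V2.Nonempty)
    (hdisj : Disjoint V1 V2) (hunion : V1 ∪ V2 = Finset.univ)
    (hc1 : (G.induce (V1 : Set V)).Connected) (hc2 : (G.induce (V2 : Set V)).Connected)
    (hm1 : m ≤ V1.card) (hm2 : m ≤ V2.card) :
    ∃ T : SimpleGraph V, T ≤ G ∧ T.IsTree ∧
      ∃ u v : V, T.Adj u v ∧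
        ¬ (T.deleteEdges {s(u, v)}).Reachable u v ∧
        m ≤ Nat.card {x : V // (T.deleteEdges {s(u, v)}).Reachable u x} ∧
        m ≤ Nat.card {x : V // (T.deleteEdges {s(u, v)}).Reachable v x} := by
  have hV2 : (V2 : Set V) = (V1 : Set V)ᶜ := by
    rw [← Finset.coe_compl, (IsCompl.of_eq hdisj.eq_bot hunion).compl_eq]
  rw [hV2] at hc2
  obtain ⟨x1, hx1⟩ := h1
  obtain ⟨x2, hx2⟩ := h2
  obtain ⟨a, b, hab, ha, hb⟩ := hG.preconnected.exists_adj_mem_notMem (S := (V1 : Set V))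
    hx1 (hV2 ▸ Finset.mem_coe.mpr hx2)
  obtain ⟨T, hTH, hT⟩ := (connected_pruneCut hc1 hc2 hab ha hb).exists_isTree_le
  have hD : ∀ ⦃x y⦄, (T.deleteEdges {s(a, b)}).Adj x y →
      (x ∈ (V1 : Set V) ↔ y ∈ (V1 : Set V)) :=
    fun _ _ => mem_iff_mem_of_le_pruneCut hTH
  have hDa := hT.1.preconnected.reachable_deleteEdges_iff_mem hD ha hb
  have hDb := hT.1.preconnected.reachable_deleteEdges_iff_notMem hD ha hb
  refine ⟨T, hTH.trans pruneCut_le, hT, a, b, adj_of_le_pruneCut hTH hT.1.preconnected ha hb,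
    fun h => hb ((hDa b).mp h), ?_, ?_⟩
  · rwa [Nat.subtype_card V1 fun x => (hDa x).symm]
  · rwa [Nat.subtype_card V2 fun x => by rw [hDb, ← Set.mem_compl_iff, ← hV2, Finset.mem_coe]]
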